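/- arXiv:0910.1387 — 3 statements merged into one kernel-verified Lean document; each statement's English description precedes it below -/
import Mathlib

section
/- Let X ⊆ ℝⁿ be non-empty, suppose every point x ∈ X lies in a semi-open subset Mₓ ⊆ X, and let C ⊂ X have empty interior. Then X \ C is dense in X. -/
def SemiOpen {n : ℕ} (X : Set (Fin n → ℝ)) : Prop :=
  X ⊆ closure (interior X)

theorem stmt_12 {n : ℕ} (X C : Set (Fin n → ℝ)) (hXne : X.Nonempty)
    (hX : ∀ x ∈ X, ∃ M, M ⊆ X ∧ x ∈ M ∧ SemiOpen M)
    (hCX : C ⊆ X) (hC : interior C = ∅) :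
    X ⊆ closure (X \ C) := by
  intro x hx
  obtain ⟨M, hMX, hxM, hM⟩ := hX x hx
  have hd : Dense Cᶜ := interior_eq_empty_iff_dense_compl.mp hC
  have h1 : interior M ⊆ closure (interior M ∩ Cᶜ) :=
    hd.open_subset_closure_inter isOpen_interior
  have h2 : interior M ∩ Cᶜ ⊆ X \ C := fun y hy =>
    ⟨hMX (interior_subset hy.1), hy.2⟩
  have h3 : closure (interior M) ⊆ closure (X \ C) := by
    calc closure (interior M) ⊆ closure (closure (interior M ∩ Cᶜ)) := closure_mono h1
      _ = closure (interior M ∩ Cᶜ) := closure_closure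
      _ ⊆ closure (X \ C) := closure_mono h2
  exact h3 (hM hxM)
end

section
/- Let W ⊆ ℝⁿ be semi-open, w ∈ W, and let v₁,…,v_m : W → ℝ be finitely many continuous functions. Then there exists a function h : ℝ → ℝⁿ with h(0) = 0, continuous at 0, such that W continues into direction h at w and each vⱼ is either decreasing, constant, or increasing into direction h at w. -/
/-- `W` continues into direction `h` at `w`. -/
def ContinuesInto {n : ℕ} (W : Set (Fin n → ℝ)) (h : ℝ → (Fin n → ℝ))
    (w : Fin n → ℝ) : Prop :=
  ∃ δ > (0:ℝ), ∀ a : ℝ, 0 < a → a < δ → ∃ U ∈ nhds (w + h a), U ⊆ W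

/-- `sgn (f - f w)` is constantly `k` on a neighborhood of `w + h a` for all small `a > 0`. -/
def SignIntoDirection {n : ℕ} (k : ℝ) (f : (Fin n → ℝ) → ℝ)
    (h : ℝ → (Fin n → ℝ)) (w : Fin n → ℝ) : Prop :=
  ∃ δ > (0:ℝ), ∀ a : ℝ, 0 < a → a < δ →
    ∃ U ∈ nhds (w + h a), ∀ y ∈ U, Real.sign (f y - f w) = k

/-!
Since `w` lies in the closure of the interior of `W`, every neighbourhood of `w` contains an open
ball inside `W`. By continuity, shrinking such a ball finitely many times makes the sign of each
`vⱼ - vⱼ(w)` constant on it, so every neighbourhood of `w` contains an open subset of `W` realising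
one of the finitely many sign patterns. By pigeonhole a single pattern is realised arbitrarily close
to `w`; choosing for each `a > 0` such a point `x a` at distance less than `a` from `w`, the
direction `h a := x a - w` does the job.
-/

open Set Filter Topology

theorem Real.sign_eq_coe_sign (r : ℝ) : Real.sign r = (SignType.sign r : ℝ) := by
  rcases lt_trichotomy r 0 with hr | rfl | hr
  · simp [Real.sign_of_neg, hr]
  · simp
  · simp [Real.sign_of_pos, hr]

section SignPattern

variable {X : Type*} [TopologicalSpace X] {U : Set X}

theorem ContinuousOn.exists_isOpen_subset_sign_eq {f : X → ℝ} (hf : ContinuousOn f U)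
    (hU : IsOpen U) (hne : U.Nonempty) :
    ∃ V ⊆ U, IsOpen V ∧ V.Nonempty ∧ ∃ t : SignType, ∀ y ∈ V, SignType.sign (f y) = t := by
  by_cases hzero : ∀ y ∈ U, f y = 0
  · exact ⟨U, subset_rfl, hU, hne, 0, fun y hy => by simp [hzero y hy]⟩
  obtain ⟨y, hyU, hy⟩ := not_forall₂.mp hzero
  have hsign : ∀ᶠ z in 𝓝 y, SignType.sign (f z) = SignType.sign (f y) :=
    ((continuousAt_sign_of_ne_zero hy).comp (hf.continuousAt (hU.mem_nhds hyU))).tendsto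
      (isOpen_discrete {SignType.sign (f y)} |>.mem_nhds rfl)
  obtain ⟨V, hVsub, hVopen, hyV⟩ := eventually_nhds_iff.mp (hsign.and (hU.mem_nhds hyU))
  exact ⟨V, fun z hz => (hVsub z hz).2, hVopen, ⟨y, hyV⟩, _, fun z hz => (hVsub z hz).1⟩

theorem exists_isOpen_subset_forall_sign_eq {ι : Type*} {f : ι → X → ℝ}
    (hf : ∀ i, ContinuousOn (f i) U) (hU : IsOpen U) (hne : U.Nonempty) (s : Finset ι) :
    ∃ V ⊆ U, IsOpen V ∧ V.Nonempty ∧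
      ∀ i ∈ s, ∃ t : SignType, ∀ y ∈ V, SignType.sign (f i y) = t := by
  classical
  induction s using Finset.induction_on with
  | empty => exact ⟨U, subset_rfl, hU, hne, by simp⟩
  | insert i s _ ih =>
    obtain ⟨V, hVU, hV, hVne, hsign⟩ := ih
    obtain ⟨V', hV'V, hV', hV'ne, t, ht⟩ :=
      ((hf i).mono hVU).exists_isOpen_subset_sign_eq hV hVne
    refine ⟨V', hV'V.trans hVU, hV', hV'ne, (Finset.forall_mem_insert _ _ _).mpr ⟨⟨t, ht⟩, ?_⟩⟩
    exact fun j hj => (hsign j hj).imp fun _ hj y hy => hj y (hV'V hy)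

end SignPattern

theorem exists_sign_pattern_near {X ι : Type*} [PseudoMetricSpace X] [Fintype ι] {W : Set X}
    {w : X} (hw : w ∈ closure (interior W)) {f : ι → X → ℝ} (hf : ∀ j, ContinuousOn (f j) W)
    {ε : ℝ} (hε : 0 < ε) :
    ∃ t : ι → SignType, ∃ x, dist x w < ε ∧
      ∃ U ∈ 𝓝 x, U ⊆ W ∧ ∀ j, ∀ y ∈ U, SignType.sign (f j y) = t j := by
  obtain ⟨V, hVsub, hV, ⟨x, hxV⟩, hsign⟩ := exists_isOpen_subset_forall_sign_eq
    (U := Metric.ball w ε ∩ interior W)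
    (fun j => (hf j).mono (inter_subset_right.trans interior_subset))
    (Metric.isOpen_ball.inter isOpen_interior)
    (mem_closure_iff.mp hw _ Metric.isOpen_ball (Metric.mem_ball_self hε)) Finset.univ
  choose t ht using fun j => hsign j (Finset.mem_univ j)
  exact ⟨t, x, (hVsub hxV).1, V, hV.mem_nhds hxV,
    fun y hy => interior_subset (hVsub hy).2, fun j y hy => ht j y hy⟩

theorem exists_forall_pos_of_forall_pos_exists {α : Type*} [Finite α] {P : α → ℝ → Prop}
    (hP : ∀ t, Monotone (P t)) (h : ∀ ε > 0, ∃ t, P t ε) : ∃ t, ∀ ε > 0, P t ε := by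
  have hfreq : ∃ᶠ ε in 𝓝[>] (0 : ℝ), ∃ t, P t ε :=
    (eventually_nhdsWithin_of_forall (s := Ioi 0) h).frequently
  obtain ⟨t, ht⟩ := frequently_exists.mp hfreq
  refine ⟨t, fun ε hε => ?_⟩
  obtain ⟨δ, hδ, hδε⟩ := (ht.and_eventually (Ioo_mem_nhdsGT hε)).exists
  exact hP t hδε.2.le hδ

theorem continuousAt_indicator_Ioi_sub {E : Type*} [SeminormedAddCommGroup E] {x : ℝ → E} {w : E}
    (hx : ∀ a > 0, dist (x a) w < a) :
    ContinuousAt ((Ioi 0).indicator fun a => x a - w) 0 := by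
  rw [ContinuousAt, indicator_of_notMem self_notMem_Ioi]
  refine squeeze_zero_norm (fun a => ?_) (continuous_abs.tendsto' 0 0 abs_zero)
  by_cases ha : a ∈ Ioi 0
  · rw [indicator_of_mem ha, ← dist_eq_norm]
    exact (hx a ha).le.trans (le_abs_self a)
  · simp [indicator_of_notMem ha]

theorem stmt_16 {n m : ℕ} (W : Set (Fin n → ℝ)) (hW : SemiOpen W)
    (w : Fin n → ℝ) (hw : w ∈ W)
    (v : Fin m → (Fin n → ℝ) → ℝ) (hv : ∀ j, ContinuousOn (v j) W) :
    ∃ h : ℝ → (Fin n → ℝ), h 0 = 0 ∧ ContinuousAt h 0 ∧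
      ContinuesInto W h w ∧
      ∀ j, SignIntoDirection (-1) (v j) h w ∨ SignIntoDirection 0 (v j) h w ∨
        SignIntoDirection 1 (v j) h w := by
  obtain ⟨t, ht⟩ := exists_forall_pos_of_forall_pos_exists
    (fun t ε ε' hεε' ⟨x, hx, hU⟩ => ⟨x, hx.trans_le hεε', hU⟩)
    fun ε hε => exists_sign_pattern_near (f := fun j y => v j y - v j w) (hW hw)
      (fun j => (hv j).sub continuousOn_const) hε
  choose! x hx U hU hUW hsign using ht
  set h : ℝ → (Fin n → ℝ) := (Ioi 0).indicator fun a => x a - w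
  have hxa : ∀ a > 0, w + h a = x a := fun a ha => by
    rw [show h a = x a - w from indicator_of_mem ha _, add_sub_cancel]
  have hdir : ∀ j, SignIntoDirection (t j) (v j) h w := fun j =>
    ⟨1, one_pos, fun a ha _ => ⟨U a, hxa a ha ▸ hU a ha,
      fun y hy => by rw [Real.sign_eq_coe_sign, hsign a ha j y hy]⟩⟩
  refine ⟨h, indicator_of_notMem self_notMem_Ioi _, continuousAt_indicator_Ioi_sub hx,
    ⟨1, one_pos, fun a ha _ => ⟨U a, hxa a ha ▸ hU a ha, hUW a ha⟩⟩, fun j => ?_⟩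
  obtain htj | htj | htj : (t j : ℝ) = -1 ∨ (t j : ℝ) = 0 ∨ (t j : ℝ) = 1 := by
    cases t j <;> simp
  · exact Or.inl (htj ▸ hdir j)
  · exact Or.inr (Or.inl (htj ▸ hdir j))
  · exact Or.inr (Or.inr (htj ▸ hdir j))
end

section
/- For the direction function h(a) = a·(2ⁿ, 2ⁿ⁻¹, …, 2) and any non-zero linear branching function v(w) = Σᵢ cᵢ wᵢ with coefficients cᵢ ∈ {-1, 0, 1}, v is increasing into direction h at any point w ∈ (ℝ≥0)ⁿ with v(w)=0 if the first non-zero coefficient is 1, and decreasing if the first non-zero coefficient is -1. -/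
-- sum of 2^(n-i) over i > j is < 2^(n-j), in ℕ
lemma aux_nat {n : ℕ} (j : Fin n) :
    (∑ i ∈ Finset.Ioi j, 2 ^ (n - (i : ℕ)) : ℕ) < 2 ^ (n - (j : ℕ)) := by
  have h1 : ∀ i ∈ Finset.Ioi j, 2 ^ (n - (i:ℕ)) = 2 * 2 ^ (n - 1 - (i:ℕ)) := by
    intro i hi
    have : (i:ℕ) < n := i.isLt
    have : n - (i:ℕ) = (n - 1 - (i:ℕ)) + 1 := by omega
    rw [this, pow_succ]; ring
  rw [Finset.sum_congr rfl h1, ← Finset.mul_sum]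
  have hinj : Set.InjOn (fun i : Fin n => n - 1 - (i:ℕ)) (Finset.Ioi j) := by
    intro a _ b _ hab
    have ha := a.isLt; have hb := b.isLt
    have hab' : n - 1 - (a:ℕ) = n - 1 - (b:ℕ) := hab
    exact Fin.ext (by omega)
  have h2 : ∑ i ∈ Finset.Ioi j, 2 ^ (n - 1 - (i:ℕ)) =
      ∑ k ∈ (Finset.Ioi j).image (fun i : Fin n => n - 1 - (i:ℕ)), 2 ^ k := by
    rw [Finset.sum_image (fun a ha b hb => hinj ha hb)]
  rw [h2]
  have hsub : (Finset.Ioi j).image (fun i : Fin n => n - 1 - (i:ℕ)) ⊆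
      Finset.range (n - 1 - (j:ℕ)) := by
    intro k hk
    simp only [Finset.mem_image, Finset.mem_Ioi] at hk
    obtain ⟨i, hi, rfl⟩ := hk
    have := i.isLt
    have : (j:ℕ) < (i:ℕ) := hi
    simp only [Finset.mem_range]; omega
  calc 2 * ∑ k ∈ (Finset.Ioi j).image (fun i : Fin n => n - 1 - (i:ℕ)), 2 ^ k
      ≤ 2 * ∑ k ∈ Finset.range (n - 1 - (j:ℕ)), 2 ^ k :=
        Nat.mul_le_mul_left 2 (Finset.sum_le_sum_of_subset hsub)
    _ = 2 * (2 ^ (n - 1 - (j:ℕ)) - 1) := by rw [Nat.geomSum_eq (le_refl 2)]; simp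
    _ < 2 ^ (n - (j:ℕ)) := by
        have hj := j.isLt
        have : n - (j:ℕ) = (n - 1 - (j:ℕ)) + 1 := by omega
        rw [this, pow_succ]
        have : 1 ≤ 2 ^ (n - 1 - (j:ℕ)) := Nat.one_le_two_pow
        omega

theorem stmt_17 {n : ℕ} (c : Fin n → ℝ)
    (hc : ∀ i, c i = -1 ∨ c i = 0 ∨ c i = 1)
    (j : Fin n) (hj : c j ≠ 0) (hmin : ∀ i, i < j → c i = 0)
    (w : Fin n → ℝ) (hw : ∀ i, 0 ≤ w i)
    (hv : ∑ i, c i * w i = 0) :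
    (c j = 1 →
      ∃ δ > (0:ℝ), ∀ a : ℝ, 0 < a → a < δ →
        ∃ U ∈ nhds (w + (fun i : Fin n => a * 2 ^ (n - (i : ℕ)))),
          ∀ y ∈ U, 0 < ∑ i, c i * y i) ∧
    (c j = -1 →
      ∃ δ > (0:ℝ), ∀ a : ℝ, 0 < a → a < δ →
        ∃ U ∈ nhds (w + (fun i : Fin n => a * 2 ^ (n - (i : ℕ)))),
          ∀ y ∈ U, (∑ i, c i * y i) < 0) := by
  set S : ℝ := ∑ i, c i * 2 ^ (n - (i : ℕ)) with hS
  -- tail sum bound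
  have hT : (∑ i ∈ Finset.Ioi j, (2:ℝ) ^ (n - (i:ℕ))) < 2 ^ (n - (j:ℕ)) := by
    have := aux_nat j
    calc (∑ i ∈ Finset.Ioi j, (2:ℝ) ^ (n - (i:ℕ)))
        = ((∑ i ∈ Finset.Ioi j, 2 ^ (n - (i:ℕ)) : ℕ) : ℝ) := by push_cast; ring
      _ < ((2 ^ (n - (j:ℕ)) : ℕ) : ℝ) := by exact_mod_cast this
      _ = 2 ^ (n - (j:ℕ)) := by push_cast; ring
  -- S = c j * 2^(n-j) + tail
  have hsplit : S = c j * 2 ^ (n - (j:ℕ)) + ∑ i ∈ Finset.Ioi j, c i * 2 ^ (n - (i:ℕ)) := by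
    rw [hS, ← Finset.add_sum_erase _ _ (Finset.mem_univ j)]
    congr 1
    refine (Finset.sum_subset ?_ ?_).symm
    · intro i hi
      simp only [Finset.mem_Ioi] at hi
      simp [Finset.mem_erase, Fin.ext_iff]
      omega
    · intro i hi hni
      simp only [Finset.mem_erase, Finset.mem_univ, and_true] at hi
      simp only [Finset.mem_Ioi] at hni
      have : i < j := lt_of_le_of_ne (not_lt.mp hni) hi
      rw [hmin i this, zero_mul]
  have htail_abs : |∑ i ∈ Finset.Ioi j, c i * 2 ^ (n - (i:ℕ))| ≤
      ∑ i ∈ Finset.Ioi j, (2:ℝ) ^ (n - (i:ℕ)) := by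
    refine (Finset.abs_sum_le_sum_abs _ _).trans (Finset.sum_le_sum fun i _ => ?_)
    rw [abs_mul, abs_pow, abs_two]
    have : |c i| ≤ 1 := by rcases hc i with h | h | h <;> rw [h] <;> norm_num
    nlinarith [pow_pos (by norm_num : (0:ℝ) < 2) (n - (i:ℕ))]
  -- continuity of v
  have hcont : Continuous (fun y : Fin n → ℝ => ∑ i, c i * y i) :=
    continuous_finset_sum _ fun i _ => continuous_const.mul (continuous_apply i)
  have hval : ∀ a : ℝ, (∑ i, c i * ((w + fun i : Fin n => a * 2 ^ (n - (i:ℕ))) i)) = a * S := by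
    intro a
    have : ∀ i : Fin n, c i * ((w + fun i : Fin n => a * 2 ^ (n - (i:ℕ))) i)
        = c i * w i + a * (c i * 2 ^ (n - (i:ℕ))) := by
      intro i; simp [Pi.add_apply]; ring
    rw [Finset.sum_congr rfl (fun i _ => this i), Finset.sum_add_distrib, hv, ← Finset.mul_sum]
    simp [hS]
  have habs := abs_le.mp htail_abs
  constructor
  · intro h1
    have hSpos : 0 < S := by
      rw [hsplit, h1, one_mul]; linarith [habs.1]
    refine ⟨1, one_pos, fun a ha _ => ?_⟩
    refine ⟨{y | 0 < ∑ i, c i * y i}, ?_, fun y hy => hy⟩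
    refine IsOpen.mem_nhds (isOpen_lt continuous_const hcont) ?_
    show 0 < ∑ i, c i * _
    rw [hval a]
    positivity
  · intro h1
    have hSneg : S < 0 := by
      rw [hsplit, h1]; linarith [habs.2]
    refine ⟨1, one_pos, fun a ha _ => ?_⟩
    refine ⟨{y | ∑ i, c i * y i < 0}, ?_, fun y hy => hy⟩
    refine IsOpen.mem_nhds (isOpen_lt hcont continuous_const) ?_
    show (∑ i, c i * _) < 0
    rw [hval a]
    exact mul_neg_of_pos_of_neg ha hSneg
end
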